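/- Let (X_{ij})_{i,j∈ℤ} be a stationary m-dependent random field that is regularly varying with index α∈(0,2). Let (r_n) be a sequence of positive integers with r_n→∞ and r_n/n→0, restricting n to integers for which k_n:=n/r_n is an integer, and fix ε>0. Then, as n→∞: (i) ℙ(there exist 1≤i,j,k≤k_n with j≠k such that ‖B̂_{ij}‖_max>ε and ‖B̂_{ik}‖_max>ε) → 0; and (ii) ℙ(there exists 1≤i≤k_n such that ‖B̂_{ii}‖_max>ε) → 0. -/

import Mathlib

open MeasureTheory ProbabilityTheory Filter Matrix

noncomputable section

/-- A real-valued random field indexed by `ℤ × ℤ` is stationary if its finite-dimensional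
distributions are invariant under all shifts of `ℤ²`. -/
def IsStationaryField {Ω : Type*} [MeasurableSpace Ω] (μ : Measure Ω)
    (X : ℤ × ℤ → Ω → ℝ) : Prop :=
  ∀ a b : ℤ,
    Measure.map (fun ω => fun p : ℤ × ℤ => X (p.1 + a, p.2 + b) ω) μ =
      Measure.map (fun ω => fun p : ℤ × ℤ => X p ω) μ

/-- A random field `X` is `m`-dependent if any two subfamilies whose index sets are separated
by a (sup-)distance greater than `m` are independent. -/
def IsMDependent {Ω : Type*} [MeasurableSpace Ω] (μ : Measure Ω)
    (X : ℤ × ℤ → Ω → ℝ) (m : ℕ) : Prop :=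
  ∀ A B : Set (ℤ × ℤ),
    (∀ p ∈ A, ∀ q ∈ B, (m : ℤ) < max |p.1 - q.1| |p.2 - q.2|) →
    IndepFun (fun ω => fun p : A => X p.1 ω) (fun ω => fun q : B => X q.1 ω) μ

/-- A positive function is slowly varying if `L (c x) / L x → 1` as `x → ∞` for every `c > 0`. -/
def SlowlyVarying (L : ℝ → ℝ) : Prop :=
  (∀ x : ℝ, 0 < x → 0 < L x) ∧
    ∀ c : ℝ, 0 < c → Tendsto (fun x => L (c * x) / L x) atTop (nhds 1)

/-- The field is regularly varying with index `α`: `ℙ(|X₀₀| > x) = x^(-α) L(x)`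
for a slowly varying `L`. -/
def IsRegVarying {Ω : Type*} [MeasurableSpace Ω] (μ : Measure Ω)
    (X : ℤ × ℤ → Ω → ℝ) (α : ℝ) : Prop :=
  ∃ L : ℝ → ℝ, SlowlyVarying L ∧
    ∀ x : ℝ, 0 < x → (μ {ω | x < |X (0, 0) ω|}).toReal = x ^ (-α) * L x

/-- The symmetrized field `X̂`. -/
def symX {Ω : Type*} (X : ℤ × ℤ → Ω → ℝ) (i j : ℤ) (ω : Ω) : ℝ :=
  if i ≤ j then X (i, j) ω else X (j, i) ω

/-- `(a_n)` is a normalizing sequence: `a_n → ∞` and `n ℙ(|X₀₀| > a_n) → 1`. -/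
def IsNormSeq {Ω : Type*} [MeasurableSpace Ω] (μ : Measure Ω)
    (X : ℤ × ℤ → Ω → ℝ) (a : ℕ → ℝ) : Prop :=
  Tendsto a atTop atTop ∧
    Tendsto (fun n : ℕ => (n : ℝ) * (μ {ω | a n < |X (0, 0) ω|}).toReal) atTop (nhds 1)

/-- The Wigner matrix `Â_n = (X̂_{ij} / b)_{1 ≤ i,j ≤ n}`. -/
def wignerMat {Ω : Type*} (X : ℤ × ℤ → Ω → ℝ) (b : ℝ) (n : ℕ) (ω : Ω) :
    Matrix (Fin n) (Fin n) ℝ :=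
  Matrix.of fun i j => symX X ((i : ℕ) + 1 : ℤ) ((j : ℕ) + 1 : ℤ) ω / b

/-- The `p × n` data matrix `A = (X_{ij} / c)_{1 ≤ i ≤ p, 1 ≤ j ≤ n}`. -/
def dataMat {Ω : Type*} (X : ℤ × ℤ → Ω → ℝ) (c : ℝ) (p n : ℕ) (ω : Ω) :
    Matrix (Fin p) (Fin n) ℝ :=
  Matrix.of fun i j => X (((i : ℕ) + 1 : ℤ), ((j : ℕ) + 1 : ℤ)) ω / c

/-- Entrywise truncation keeping the entries of absolute value `> t` : `M^{>t}`. -/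
def truncGt {p q : ℕ} (M : Matrix (Fin p) (Fin q) ℝ) (t : ℝ) : Matrix (Fin p) (Fin q) ℝ :=
  Matrix.of fun i j => if t < |M i j| then M i j else 0

/-- `M^{<t} := M - M^{>t}`, i.e. the entries of absolute value `≤ t`. -/
def truncLe {p q : ℕ} (M : Matrix (Fin p) (Fin q) ℝ) (t : ℝ) : Matrix (Fin p) (Fin q) ℝ :=
  M - truncGt M t

/-- The spectral norm (largest singular value) of a rectangular real matrix, realized as the
operator norm of the induced map between Euclidean spaces. -/
def specNorm {p q : ℕ} (M : Matrix (Fin p) (Fin q) ℝ) : ℝ :=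
  ‖LinearMap.toContinuousLinearMap (Matrix.toEuclideanLin M)‖

/-- The event that the `(k,l)` block (of size `r × r`, `1`-based block indices) of the
matrix `(X̂_{ij}/b)` has max-norm `> ε`. -/
def blockExceed {Ω : Type*} (X : ℤ × ℤ → Ω → ℝ) (b : ℝ) (r k l : ℕ) (ε : ℝ) (ω : Ω) : Prop :=
  ∃ i ∈ Finset.Ioc ((k - 1) * r) (k * r), ∃ j ∈ Finset.Ioc ((l - 1) * r) (l * r),
    ε < |symX X (i : ℤ) (j : ℤ) ω / b|

/-- `r_n = n^(1-η)` (as a natural number, via the floor). -/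
def rseq (η : ℝ) (n : ℕ) : ℕ := ⌊(n : ℝ) ^ (1 - η)⌋₊

/-- `k_n = n^η` (as a natural number, via the floor). -/
def kseq (η : ℝ) (n : ℕ) : ℕ := ⌊(n : ℝ) ^ η⌋₊

/-- The set of `n` for which `n^(1-η)` and `n^η` are integers. -/
def goodSet (η : ℝ) : Set ℕ :=
  {n | ((rseq η n : ℝ) = (n : ℝ) ^ (1 - η)) ∧ ((kseq η n : ℝ) = (n : ℝ) ^ η)}

/-- `lam` is an eigenvalue of the real matrix `M`. -/
def IsEigenvalue {n : Type*} [Fintype n] (M : Matrix n n ℝ) (lam : ℝ) : Prop :=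
  ∃ v : n → ℝ, v ≠ 0 ∧ M.mulVec v = lam • v

/-- The multiset of singular values of a rectangular real matrix: the square roots of the
eigenvalues of `Mᵀ M` (`= Mᴴ M` over `ℝ`), with multiplicity. -/
def singularValues {p q : ℕ} (M : Matrix (Fin p) (Fin q) ℝ) : Multiset ℝ :=
  Finset.univ.val.map fun i =>
    Real.sqrt ((show (Mᵀ * M).IsHermitian by
      unfold Matrix.IsHermitian
      simp [Matrix.conjTranspose_eq_transpose_of_trivial, Matrix.transpose_mul]).eigenvalues i)

/-- The eigenvalues of a real symmetric matrix, sorted increasingly (as a list);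
junk value for non-symmetric matrices. -/
def sortedEigs {N : ℕ} (M : Matrix (Fin N) (Fin N) ℝ) : List ℝ :=
  if h : M.IsHermitian then (Finset.univ.val.map h.eigenvalues).sort (· ≤ ·)
  else List.replicate N 0

/-- The index of row `i` of block-row `a` inside a `(k*r) × (k*r)` matrix partitioned
into `r × r` blocks. -/
def blkIdx {k r : ℕ} (a : Fin k) (i : Fin r) : Fin (k * r) :=
  ⟨a.1 * r + i.1, by
    have hi := i.2
    have ha := a.2
    have h1 : a.1 * r + i.1 < (a.1 + 1) * r := by nlinarith
    have h2 : (a.1 + 1) * r ≤ k * r := by nlinarith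
    exact lt_of_lt_of_le h1 h2⟩

/-- The `(a,b)` block (of size `r × r`) of a `(k*r) × (k*r)` matrix. -/
def blockOf {k r : ℕ} (H : Matrix (Fin (k * r)) (Fin (k * r)) ℝ) (a b : Fin k) :
    Matrix (Fin r) (Fin r) ℝ :=
  Matrix.of fun i j => H (blkIdx a i) (blkIdx b j)

/-- The `n × n` matrix with entries `X̂_{ij} 1{|X̂_{ij}| < t}` (not yet normalized). -/
def truncSymMat {Ω : Type*} (X : ℤ × ℤ → Ω → ℝ) (n : ℕ) (t : ℝ) (ω : Ω) :
    Matrix (Fin n) (Fin n) ℝ :=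
  Matrix.of fun i j =>
    if |symX X ((i : ℕ) + 1 : ℤ) ((j : ℕ) + 1 : ℤ) ω| < t
    then symX X ((i : ℕ) + 1 : ℤ) ((j : ℕ) + 1 : ℤ) ω else 0


/-!
With `p_n = ℙ(|X₀₀| > ε b_n)`, regular variation and `n ℙ(|X₀₀| > a_n) → 1` give
`n² p_n → ε^(-α)`, and by stationarity every entry of `Â_n` exceeds `ε` with probability `p_n`.
Part (ii) is then a union bound over the at most `n (2 r_n + 1)` entries of the diagonal blocks.
For part (i), take exceedances at `(s,t)` and `(u,v)` in one block row and different blocks. If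
their upper-triangular positions are more than `m` apart, `m`-dependence bounds the joint
probability by `p_n²`, and there are at most `n³ r_n` such pairs. Otherwise `(s,t)` lies within
`r_n + m` of the diagonal or its column lies within `m` of a block boundary, which leaves
`O(n r_n + n k_n)` entries. Both bounds are `O(r_n / n + 1 / r_n)`.
-/
namespace BlockCount

open Finset

def band (N w : ℕ) : Finset (ℕ × ℕ) :=
  (Ioc 0 N ×ˢ Ioc 0 N).filter fun p => p.1 ≤ p.2 + w ∧ p.2 ≤ p.1 + w

theorem card_band_le (N w : ℕ) : #(band N w) ≤ N * (2 * w + 1) := by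
  calc #(band N w) ≤ #(Ioc 0 N ×ˢ range (2 * w + 1)) := by
        refine card_le_card_of_injOn (fun p => (p.1, p.2 + w - p.1)) ?_ ?_
        · intro p hp
          simp only [band, coe_filter, mem_product, mem_Ioc, Set.mem_ofPred_eq] at hp
          simp only [coe_product, coe_Ioc, coe_range, Set.mem_prod, Set.mem_Ioc, Set.mem_Iio]
          omega
        · rintro ⟨s, t⟩ hp ⟨s', t'⟩ hq h
          simp only [band, coe_filter, mem_product, mem_Ioc, Set.mem_ofPred_eq] at hp hq
          simp only [Prod.mk.injEq] at h ⊢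
          omega
    _ = N * (2 * w + 1) := by simp

def blockBoundary (K R m : ℕ) : Finset ℕ :=
  (range K).biUnion fun c => Ioc (c * R - m) (c * R + m)

theorem card_blockBoundary_le (K R m : ℕ) : #(blockBoundary K R m) ≤ K * (2 * m) := by
  have hc : ∀ c ∈ range K, #(Ioc (c * R - m) (c * R + m)) ≤ 2 * m := fun c _ => by
    rw [Nat.card_Ioc]; omega
  exact card_biUnion_le.trans ((sum_le_card_nsmul _ _ _ hc).trans (by simp))

theorem sub_one_lt_div_mul_of_div_ne {R t v : ℕ} (htv : t ≤ v)
    (hne : (t - 1) / R ≠ (v - 1) / R) :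
    t - 1 < (v - 1) / R * R := by
  have hR : 0 < R := Nat.pos_of_ne_zero fun h => hne (by simp [h])
  exact (Nat.div_lt_iff_lt_mul hR).mp (lt_of_le_of_ne (Nat.div_le_div_right (by omega)) hne)

theorem mem_blockBoundary {K R m t v : ℕ} (ht : t ∈ Ioc 0 (K * R)) (hv : v ∈ Ioc 0 (K * R))
    (htv : t ≤ v + m) (hvt : v ≤ t + m) (hne : (t - 1) / R ≠ (v - 1) / R) :
    t ∈ blockBoundary K R m := by
  rw [mem_Ioc] at ht hv
  simp only [blockBoundary, mem_biUnion, mem_range, mem_Ioc]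
  rcases le_total t v with h | h
  · have h1 := sub_one_lt_div_mul_of_div_ne h hne
    have h2 := Nat.div_mul_le_self (v - 1) R
    exact ⟨(v - 1) / R, Nat.lt_of_mul_lt_mul_right (a := R) (by omega), by omega, by omega⟩
  · have h1 := sub_one_lt_div_mul_of_div_ne h hne.symm
    have h2 := Nat.div_mul_le_self (t - 1) R
    exact ⟨(t - 1) / R, Nat.lt_of_mul_lt_mul_right (a := R) (by omega), by omega, by omega⟩

def sameBlockRowPairs (N R : ℕ) : Finset ((ℕ × ℕ) × (ℕ × ℕ)) :=
  ((Ioc 0 N ×ˢ Ioc 0 N) ×ˢ (Ioc 0 N ×ˢ Ioc 0 N)).filter fun q =>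
    (q.1.1 - 1) / R = (q.2.1 - 1) / R

theorem card_sameBlockRowPairs_le {R : ℕ} (hR : 0 < R) (N : ℕ) :
    #(sameBlockRowPairs N R) ≤ N ^ 3 * R := by
  calc #(sameBlockRowPairs N R) ≤ #((Ioc 0 N ×ˢ Ioc 0 N ×ˢ Ioc 0 N) ×ˢ range R) := by
        refine card_le_card_of_injOn (fun q => ((q.1.1, q.1.2, q.2.2), (q.2.1 - 1) % R)) ?_ ?_
        · intro q hq
          simp only [sameBlockRowPairs, coe_filter, mem_product, Set.mem_ofPred_eq] at hq
          simp only [coe_product, coe_range, Set.mem_prod, mem_coe, Set.mem_Iio]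
          exact ⟨⟨hq.1.1.1, hq.1.1.2, hq.1.2.2⟩, Nat.mod_lt _ hR⟩
        · rintro ⟨⟨s, t⟩, ⟨u, v⟩⟩ hq ⟨⟨s', t'⟩, ⟨u', v'⟩⟩ hq' h
          simp only [sameBlockRowPairs, coe_filter, mem_product, mem_Ioc, Set.mem_ofPred_eq]
            at hq hq'
          simp only [Prod.mk.injEq] at h ⊢
          obtain ⟨⟨rfl, rfl, rfl⟩, hmod⟩ := h
          have hu : u - 1 = u' - 1 := by
            rw [← Nat.div_add_mod (u - 1) R, ← Nat.div_add_mod (u' - 1) R, ← hq.2, hq'.2, hmod]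
          omega
    _ = N ^ 3 * R := by simp only [card_product, Nat.card_Ioc, card_range, Nat.sub_zero]; ring

theorem le_add_of_sub_one_div_eq {R s u : ℕ} (hR : 0 < R) (h : (s - 1) / R = (u - 1) / R) :
    s ≤ u + R := by
  have h1 := Nat.div_add_mod (s - 1) R
  have h2 := Nat.mod_lt (s - 1) hR
  have h3 := Nat.div_mul_le_self (u - 1) R
  rw [← h, mul_comm] at h3
  omega

theorem mem_Ioc_and_sub_one_div_eq {K R i s : ℕ} (hi : i ∈ Icc 1 K)
    (hs : s ∈ Ioc ((i - 1) * R) (i * R)) :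
    s ∈ Ioc 0 (K * R) ∧ (s - 1) / R = i - 1 := by
  rw [mem_Icc] at hi
  rw [mem_Ioc] at hs ⊢
  have hiK : i * R ≤ K * R := Nat.mul_le_mul_right R hi.2
  refine ⟨⟨by omega, by omega⟩, Nat.div_eq_of_lt_le (by omega) ?_⟩
  rw [Nat.sub_add_cancel hi.1]
  omega

end BlockCount

def sortIdx (s t : ℕ) : ℤ × ℤ := ((min s t : ℕ), (max s t : ℕ))

def supDist (p q : ℤ × ℤ) : ℤ := max |p.1 - q.1| |p.2 - q.2|

theorem symX_natCast_eq {Ω : Type*} (X : ℤ × ℤ → Ω → ℝ) (s t : ℕ) (ω : Ω) :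
    symX X s t ω = X (sortIdx s t) ω := by
  rcases le_total s t with h | h
  · simp [symX, sortIdx, h]
  · rcases h.eq_or_lt with rfl | h
    · simp [symX, sortIdx]
    · simp [symX, sortIdx, h.le, not_le.2 (Nat.cast_lt.2 h)]

theorem lt_supDist_sortIdx_or_near (m s t u v : ℕ) :
    (m : ℤ) < supDist (sortIdx s t) (sortIdx u v) ∨
      (s ≤ u + m ∧ u ≤ s + m ∧ t ≤ v + m ∧ v ≤ t + m) ∨
      (s ≤ v + m ∧ v ≤ s + m ∧ t ≤ u + m ∧ u ≤ t + m) := by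
  rw [or_iff_not_imp_left, not_lt, supDist, max_le_iff, abs_le, abs_le]
  simp only [sortIdx]
  omega

section Field

variable {Ω : Type*} [MeasurableSpace Ω] {μ : Measure Ω} {X : ℤ × ℤ → Ω → ℝ}

theorem IsStationaryField.identDistrib (hstat : IsStationaryField μ X)
    (hmeas : ∀ p, Measurable (X p)) (p : ℤ × ℤ) : IdentDistrib (X p) (X (0, 0)) μ μ := by
  refine ⟨(hmeas p).aemeasurable, (hmeas _).aemeasurable, ?_⟩
  have hfield : ∀ c : ℤ × ℤ, Measurable fun ω (q : ℤ × ℤ) => X (q.1 + c.1, q.2 + c.2) ω :=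
    fun c => measurable_pi_lambda _ fun q => hmeas _
  have heval : Measurable fun g : ℤ × ℤ → ℝ => g (0, 0) := measurable_pi_apply _
  have h := congrArg (Measure.map fun g : ℤ × ℤ → ℝ => g (0, 0)) (hstat p.1 p.2)
  rw [Measure.map_map heval (hfield p), Measure.map_map heval (by simpa using hfield 0)] at h
  simpa [Function.comp_def] using h

theorem IsMDependent.indepFun {m : ℕ} (hdep : IsMDependent μ X m) {p q : ℤ × ℤ}
    (h : (m : ℤ) < supDist p q) : IndepFun (X p) (X q) μ := by
  have hpq := hdep {p} {q} fun p' hp' q' hq' => by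
    rw [Set.mem_singleton_iff] at hp' hq'
    subst hp' hq'
    exact h
  have hevalp : Measurable fun f : ({p} : Set (ℤ × ℤ)) → ℝ => f ⟨p, rfl⟩ := measurable_pi_apply _
  have hevalq : Measurable fun f : ({q} : Set (ℤ × ℤ)) → ℝ => f ⟨q, rfl⟩ := measurable_pi_apply _
  exact hpq.comp hevalp hevalq

theorem IsRegVarying.tendsto_mul_measureReal {α : ℝ} (hreg : IsRegVarying μ X α) {a : ℕ → ℝ}
    (ha : IsNormSeq μ X a) {ε : ℝ} (hε : 0 < ε) :
    Tendsto (fun n : ℕ => n * μ.real {ω | ε < |X (0, 0) ω / a n|}) atTop (nhds (ε ^ (-α))) := by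
  obtain ⟨L, ⟨hLpos, hLslow⟩, hform⟩ := hreg
  -- `n ℙ(|X₀₀| > ε aₙ) = n ℙ(|X₀₀| > aₙ) · ε^(-α) · L(ε aₙ) / L(aₙ)`
  have hlim := ha.2.mul (tendsto_const_nhds (x := ε ^ (-α)) |>.mul ((hLslow ε hε).comp ha.1))
  rw [one_mul, mul_one] at hlim
  refine hlim.congr' ?_
  filter_upwards [ha.1.eventually_gt_atTop 0] with n hn
  have hset : {ω | ε < |X (0, 0) ω / a n|} = {ω | ε * a n < |X (0, 0) ω|} := by
    ext ω
    simp [abs_div, abs_of_pos hn, lt_div_iff₀ hn]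
  have hLn := (hLpos _ hn).ne'
  rw [hset, measureReal_def, hform _ hn, hform _ (mul_pos hε hn),
    Real.mul_rpow hε.le hn.le, Function.comp_apply]
  field_simp

end Field

section Events

open Finset BlockCount

variable {Ω : Type*} {X : ℤ × ℤ → Ω → ℝ} {b ε : ℝ}

def entryExceed (X : ℤ × ℤ → Ω → ℝ) (b ε : ℝ) (s t : ℕ) : Set Ω :=
  {ω | ε < |symX X s t ω / b|}

theorem entryExceed_eq_preimage (s t : ℕ) :
    entryExceed X b ε s t = X (sortIdx s t) ⁻¹' {y | ε < |y / b|} := by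
  ext ω
  simp [entryExceed, symX_natCast_eq]

theorem exists_entryExceed_of_blockExceed {K R i j : ℕ} {ω : Ω} (hi : i ∈ Icc 1 K)
    (hj : j ∈ Icc 1 K) (h : blockExceed X b R i j ε ω) :
    ∃ s t, s ∈ Ioc 0 (K * R) ∧ t ∈ Ioc 0 (K * R) ∧ (s - 1) / R = i - 1 ∧ (t - 1) / R = j - 1 ∧
      ω ∈ entryExceed X b ε s t := by
  obtain ⟨s, hs, t, ht, hst⟩ := h
  obtain ⟨hs, hsi⟩ := mem_Ioc_and_sub_one_div_eq hi hs
  obtain ⟨ht, htj⟩ := mem_Ioc_and_sub_one_div_eq hj ht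
  exact ⟨s, t, hs, ht, hsi, htj, hst⟩

theorem diagBlockEvent_subset {K R N : ℕ} (hR : 0 < R) (hN : K * R ≤ N) :
    {ω | ∃ i ∈ Icc 1 K, blockExceed X b R i i ε ω} ⊆
      ⋃ p ∈ band N R, entryExceed X b ε p.1 p.2 := by
  rintro ω ⟨i, hi, h⟩
  obtain ⟨s, t, hs, ht, hsi, hti, hst⟩ := exists_entryExceed_of_blockExceed hi hi h
  have hband : (s, t) ∈ band N R := by
    simp only [band, mem_filter, mem_product]
    exact ⟨⟨Ioc_subset_Ioc_right hN hs, Ioc_subset_Ioc_right hN ht⟩,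
      le_add_of_sub_one_div_eq hR (hsi.trans hti.symm),
      le_add_of_sub_one_div_eq hR (hti.trans hsi.symm)⟩
  exact Set.mem_biUnion hband hst

theorem rowPairEvent_subset {K R N : ℕ} (m : ℕ) (hR : 0 < R) (hN : K * R ≤ N) :
    {ω | ∃ i ∈ Icc 1 K, ∃ j ∈ Icc 1 K, ∃ l ∈ Icc 1 K, j ≠ l ∧
        blockExceed X b R i j ε ω ∧ blockExceed X b R i l ε ω} ⊆
      (⋃ p ∈ band N (R + m) ∪ Ioc 0 N ×ˢ blockBoundary K R m, entryExceed X b ε p.1 p.2) ∪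
        ⋃ q ∈ (sameBlockRowPairs N R).filter
            (fun q => (m : ℤ) < supDist (sortIdx q.1.1 q.1.2) (sortIdx q.2.1 q.2.2)),
          entryExceed X b ε q.1.1 q.1.2 ∩ entryExceed X b ε q.2.1 q.2.2 := by
  rintro ω ⟨i, hi, j, hj, l, hl, hjl, hij, hil⟩
  obtain ⟨s, t, hs, ht, hsi, htj, hst⟩ := exists_entryExceed_of_blockExceed hi hj hij
  obtain ⟨u, v, hu, hv, hui, hvl, huv⟩ := exists_entryExceed_of_blockExceed hi hl hil
  have hsu : (s - 1) / R = (u - 1) / R := hsi.trans hui.symm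
  have htv : (t - 1) / R ≠ (v - 1) / R := by
    rw [mem_Icc] at hj hl
    omega
  have hIoc : Ioc 0 (K * R) ⊆ Ioc 0 N := Ioc_subset_Ioc_right hN
  -- Close as they stand, `t` and `v` straddle a block boundary; close after transposition,
  -- `t` is near `u`, which shares a block with `s`.
  rcases lt_supDist_sortIdx_or_near m s t u v with hfar | ⟨-, -, htv', hvt'⟩ | ⟨hsv, hvs, htu, hut⟩
  · refine Or.inr (Set.mem_biUnion (x := ((s, t), (u, v))) ?_ ⟨hst, huv⟩)
    simp only [mem_coe, sameBlockRowPairs, mem_filter, mem_product]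
    exact ⟨⟨⟨⟨hIoc hs, hIoc ht⟩, hIoc hu, hIoc hv⟩, hsu⟩, hfar⟩
  · exact Or.inl (Set.mem_biUnion (x := (s, t))
      (mem_union_right _ (mem_product.2 ⟨hIoc hs, mem_blockBoundary ht hv htv' hvt' htv⟩)) hst)
  · have hsu' := le_add_of_sub_one_div_eq hR hsu
    have hus' := le_add_of_sub_one_div_eq hR hsu.symm
    have hband : (s, t) ∈ band N (R + m) := by
      simp only [band, mem_filter, mem_product]
      exact ⟨⟨hIoc hs, hIoc ht⟩, by omega, by omega⟩
    exact Or.inl (Set.mem_biUnion (mem_union_left _ hband) hst)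

variable [MeasurableSpace Ω] {μ : Measure Ω}

theorem measurableSet_exceed (b ε : ℝ) : MeasurableSet {y : ℝ | ε < |y / b|} :=
  measurableSet_lt measurable_const (measurable_id.div_const _).abs

theorem measureReal_entryExceed (hstat : IsStationaryField μ X) (hmeas : ∀ p, Measurable (X p))
    (s t : ℕ) : μ.real (entryExceed X b ε s t) = μ.real {ω | ε < |X (0, 0) ω / b|} := by
  rw [entryExceed_eq_preimage, measureReal_def, measureReal_def,
    (hstat.identDistrib hmeas _).measure_mem_eq (measurableSet_exceed b ε)]
  rfl

theorem measureReal_entryExceed_inter (hstat : IsStationaryField μ X)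
    (hmeas : ∀ p, Measurable (X p)) {m : ℕ} (hdep : IsMDependent μ X m) {s t u v : ℕ}
    (hfar : (m : ℤ) < supDist (sortIdx s t) (sortIdx u v)) :
    μ.real (entryExceed X b ε s t ∩ entryExceed X b ε u v) =
      μ.real {ω | ε < |X (0, 0) ω / b|} ^ 2 := by
  have hindep := (hdep.indepFun hfar).measure_inter_preimage_eq_mul _ _
    (measurableSet_exceed b ε) (measurableSet_exceed b ε)
  calc _ = μ.real (entryExceed X b ε s t) * μ.real (entryExceed X b ε u v) := by
        simp only [entryExceed_eq_preimage, measureReal_def, hindep, ENNReal.toReal_mul]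
    _ = _ := by rw [measureReal_entryExceed hstat hmeas, measureReal_entryExceed hstat hmeas, sq]

theorem measureReal_biUnion_le_card_mul {ι : Type*} (S : Finset ι) (E : ι → Set Ω) {c : ℝ}
    (h : ∀ i ∈ S, μ.real (E i) ≤ c) : μ.real (⋃ i ∈ S, E i) ≤ #S * c :=
  (measureReal_biUnion_finset_le S E).trans (by simpa using sum_le_card_nsmul S _ c h)

variable [IsFiniteMeasure μ]

theorem measureReal_diagBlockEvent_le (hstat : IsStationaryField μ X)
    (hmeas : ∀ p, Measurable (X p)) {K R N : ℕ} (hR : 0 < R) (hN : K * R ≤ N) :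
    μ.real {ω | ∃ i ∈ Icc 1 K, blockExceed X b R i i ε ω} ≤
      N * (2 * R + 1) * μ.real {ω | ε < |X (0, 0) ω / b|} := by
  have hcard : (#(band N R) : ℝ) ≤ N * (2 * R + 1) := by exact_mod_cast card_band_le N R
  calc _ ≤ μ.real (⋃ p ∈ band N R, entryExceed X b ε p.1 p.2) :=
        measureReal_mono (diagBlockEvent_subset hR hN) (measure_ne_top _ _)
    _ ≤ #(band N R) * μ.real {ω | ε < |X (0, 0) ω / b|} :=
        measureReal_biUnion_le_card_mul _ _ fun _ _ => (measureReal_entryExceed hstat hmeas _ _).le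
    _ ≤ _ := by gcongr

theorem measureReal_rowPairEvent_le (hstat : IsStationaryField μ X)
    (hmeas : ∀ p, Measurable (X p)) {m : ℕ} (hdep : IsMDependent μ X m) {K R N : ℕ}
    (hR : 0 < R) (hN : K * R ≤ N) :
    μ.real {ω | ∃ i ∈ Icc 1 K, ∃ j ∈ Icc 1 K, ∃ l ∈ Icc 1 K, j ≠ l ∧
        blockExceed X b R i j ε ω ∧ blockExceed X b R i l ε ω} ≤
      N * (2 * (R + m) + 1 + K * (2 * m)) * μ.real {ω | ε < |X (0, 0) ω / b|} +
        N ^ 3 * R * μ.real {ω | ε < |X (0, 0) ω / b|} ^ 2 := by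
  have hcard₁ : #(band N (R + m) ∪ Ioc 0 N ×ˢ blockBoundary K R m) ≤
      N * (2 * (R + m) + 1 + K * (2 * m)) :=
    calc _ ≤ #(band N (R + m)) + #(Ioc 0 N) * #(blockBoundary K R m) := by
          rw [← card_product]; exact card_union_le _ _
      _ ≤ N * (2 * (R + m) + 1) + N * (K * (2 * m)) := by
          gcongr
          · exact card_band_le N (R + m)
          · simp
          · exact card_blockBoundary_le K R m
      _ = _ := by ring
  have hcard₂ : #((sameBlockRowPairs N R).filter
      (fun q => (m : ℤ) < supDist (sortIdx q.1.1 q.1.2) (sortIdx q.2.1 q.2.2))) ≤ N ^ 3 * R :=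
    (card_filter_le _ _).trans (card_sameBlockRowPairs_le hR N)
  calc _ ≤ _ := measureReal_mono (rowPairEvent_subset m hR hN) (measure_ne_top _ _)
    _ ≤ _ := measureReal_union_le _ _
    _ ≤ _ := add_le_add
        (measureReal_biUnion_le_card_mul _ _ fun _ _ =>
          (measureReal_entryExceed hstat hmeas _ _).le)
        (measureReal_biUnion_le_card_mul _ _ fun _ hp =>
          (measureReal_entryExceed_inter hstat hmeas hdep (mem_filter.1 hp).2).le)
    _ ≤ _ := by gcongr; exacts [mod_cast hcard₁, mod_cast hcard₂]

end Events

theorem tendsto_zero_of_le_of_sq_mul_tendsto {f c d q : ℕ → ℝ} {L : ℝ}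
    (hq : Tendsto (fun n : ℕ => (n : ℝ) ^ 2 * q n) atTop (nhds L))
    (hc : Tendsto (fun n : ℕ => c n / n) atTop (nhds 0))
    (hd : Tendsto (fun n : ℕ => d n / n) atTop (nhds 0)) (hf0 : ∀ n, 0 ≤ f n)
    (hf : ∀ᶠ n in atTop, f n ≤ n * c n * q n + n ^ 3 * d n * q n ^ 2) :
    Tendsto f atTop (nhds 0) := by
  have hlim : Tendsto (fun n : ℕ => c n / n * (n ^ 2 * q n) + d n / n * (n ^ 2 * q n) ^ 2)
      atTop (nhds 0) := by
    simpa using (hc.mul hq).add (hd.mul (hq.pow 2))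
  refine squeeze_zero' (Eventually.of_forall hf0) ?_ hlim
  filter_upwards [hf, eventually_gt_atTop 0] with n hfn hn
  refine hfn.trans_eq ?_
  field_simp

theorem tendsto_natDiv_div_self_zero {r : ℕ → ℕ} (hr : Tendsto r atTop atTop) :
    Tendsto (fun n : ℕ => ((n / r n : ℕ) : ℝ) / n) atTop (nhds 0) := by
  have hinv : Tendsto (fun n => ((r n : ℝ))⁻¹) atTop (nhds 0) :=
    (tendsto_natCast_atTop_atTop.comp hr).inv_tendsto_atTop
  refine squeeze_zero' (Eventually.of_forall fun n => by positivity) ?_ hinv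
  filter_upwards [hr.eventually_gt_atTop 0, eventually_gt_atTop 0] with n hR hn
  rw [div_le_iff₀ (by positivity), inv_mul_eq_div, le_div_iff₀ (by positivity)]
  exact_mod_cast Nat.div_mul_le_self n (r n)

theorem stmt0_general {Ω : Type*} [MeasurableSpace Ω] (μ : Measure Ω) [IsProbabilityMeasure μ]
    (X : ℤ × ℤ → Ω → ℝ) (hmeas : ∀ p, Measurable (X p))
    (m : ℕ) (hstat : IsStationaryField μ X) (hdep : IsMDependent μ X m)
    (α : ℝ) (hreg : IsRegVarying μ X α)
    (a : ℕ → ℝ) (ha : IsNormSeq μ X a)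
    (r : ℕ → ℕ) (hr : Tendsto r atTop atTop)
    (hrn : Tendsto (fun n : ℕ => (r n : ℝ) / (n : ℝ)) atTop (nhds 0))
    (ε : ℝ) (hε : 0 < ε) :
    Tendsto
      (fun n : ℕ => μ {ω | ∃ i ∈ Finset.Icc 1 (n / r n), ∃ j ∈ Finset.Icc 1 (n / r n),
          ∃ l ∈ Finset.Icc 1 (n / r n), j ≠ l ∧
          blockExceed X (a (n ^ 2)) (r n) i j ε ω ∧ blockExceed X (a (n ^ 2)) (r n) i l ε ω})
      (atTop ⊓ Filter.principal {n : ℕ | r n ∣ n}) (nhds 0) ∧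
    Tendsto
      (fun n : ℕ => μ {ω | ∃ i ∈ Finset.Icc 1 (n / r n),
          blockExceed X (a (n ^ 2)) (r n) i i ε ω})
      (atTop ⊓ Filter.principal {n : ℕ | r n ∣ n}) (nhds 0) := by
  have hq : Tendsto (fun n : ℕ => (n : ℝ) ^ 2 * μ.real {ω | ε < |X (0, 0) ω / a (n ^ 2)|})
      atTop (nhds (ε ^ (-α))) :=
    ((hreg.tendsto_mul_measureReal ha hε).comp (tendsto_pow_atTop two_ne_zero)).congr
      fun n => by simp
  have hinv : Tendsto (fun n : ℕ => 1 / (n : ℝ)) atTop (nhds 0) :=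
    tendsto_one_div_atTop_nhds_zero_nat
  have hR : ∀ᶠ n in atTop, 0 < r n := hr.eventually_gt_atTop 0
  have hKR : ∀ n, n / r n * r n ≤ n := fun n => Nat.div_mul_le_self n (r n)
  refine ⟨?_, ?_⟩ <;> refine ((ENNReal.tendsto_toReal_zero_iff).1 ?_).mono_left inf_le_left
  · refine tendsto_zero_of_le_of_sq_mul_tendsto hq
      (c := fun n => 2 * (r n + m) + 1 + (n / r n : ℕ) * (2 * m)) (d := fun n => r n) ?_ hrn (fun _ => measureReal_nonneg) ?_
    · have := ((hrn.const_mul 2).add (hinv.const_mul (2 * (m : ℝ) + 1))).add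
        ((tendsto_natDiv_div_self_zero hr).const_mul (2 * (m : ℝ)))
      simp only [mul_zero, add_zero] at this
      exact this.congr fun n => by ring
    · filter_upwards [hR] with n hn
      exact measureReal_rowPairEvent_le hstat hmeas hdep hn (hKR n)
  · refine tendsto_zero_of_le_of_sq_mul_tendsto hq (c := fun n => 2 * r n + 1) (d := 0) ?_ (by simp)
      (fun _ => measureReal_nonneg) ?_
    · have := (hrn.const_mul 2).add hinv
      simp only [mul_zero, add_zero] at this
      exact this.congr fun n => by ring
    · filter_upwards [hR] with n hn
      exact (measureReal_diagBlockEvent_le hstat hmeas hn (hKR n)).trans_eq (by simp)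

/-- Lemma 4.1 of the paper: for a stationary m-dependent regularly varying
field with index `α ∈ (0,2)`, with probability tending to 1 (along the `n` with `r_n ∣ n`),
the matrix `Â_n^{>ε}` has at most one nonzero block in each row, and no nonzero diagonal
block. -/
theorem stmt0 {Ω : Type*} [MeasurableSpace Ω] (μ : Measure Ω) [IsProbabilityMeasure μ]
    (X : ℤ × ℤ → Ω → ℝ) (hmeas : ∀ p, Measurable (X p))
    (m : ℕ) (hstat : IsStationaryField μ X) (hdep : IsMDependent μ X m)
    (α : ℝ) (hα0 : 0 < α) (hα2 : α < 2) (hreg : IsRegVarying μ X α)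
    (a : ℕ → ℝ) (ha : IsNormSeq μ X a)
    (r : ℕ → ℕ) (hr : Tendsto r atTop atTop)
    (hrn : Tendsto (fun n : ℕ => (r n : ℝ) / (n : ℝ)) atTop (nhds 0))
    (ε : ℝ) (hε : 0 < ε) :
    Tendsto
      (fun n : ℕ => μ {ω | ∃ i ∈ Finset.Icc 1 (n / r n), ∃ j ∈ Finset.Icc 1 (n / r n),
          ∃ l ∈ Finset.Icc 1 (n / r n), j ≠ l ∧
          blockExceed X (a (n ^ 2)) (r n) i j ε ω ∧ blockExceed X (a (n ^ 2)) (r n) i l ε ω})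
      (atTop ⊓ Filter.principal {n : ℕ | r n ∣ n}) (nhds 0) ∧
    Tendsto
      (fun n : ℕ => μ {ω | ∃ i ∈ Finset.Icc 1 (n / r n),
          blockExceed X (a (n ^ 2)) (r n) i i ε ω})
      (atTop ⊓ Filter.principal {n : ℕ | r n ∣ n}) (nhds 0) :=
  stmt0_general μ X hmeas m hstat hdep α hreg a ha r hr hrn ε hε
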